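/- arXiv:math/0110330 — 2 statements merged into one kernel-verified Lean document; each statement's English description precedes it below -/
import Mathlib

section
/- Let M be a symplectic vector space of dimension 2n over ℂ with symplectic form Ω, and let C be a subspace of dimension n+k with 0 ≤ k ≤ n. Then the restriction of Ω^k to C is nonzero, and the restriction of Ω^(k+1) to C vanishes if and only if C is coisotropic. -/
open Module

/-- The symplectic complement of a subspace. -/
def sympCompl {K M : Type*} [Field K] [AddCommGroup M] [Module K M]
    (Ω : M →ₗ[K] M →ₗ[K] K) (C : Submodule K M) : Submodule K M where
  carrier := {v | ∀ w ∈ C, Ω v w = 0}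
  add_mem' := by
    intro a b ha hb w hw
    simp [ha w hw, hb w hw]
  zero_mem' := by
    intro w hw
    simp
  smul_mem' := by
    intro c a ha w hw
    simp [ha w hw]

/-- The `k`-fold wedge power of a 2-form, evaluated on `2k` vectors. -/
noncomputable def wedgePow {K M : Type*} [Field K] [AddCommGroup M] [Module K M]
    (Ω : M →ₗ[K] M →ₗ[K] K) (k : ℕ) (v : Fin (2 * k) → M) : K :=
  ∑ σ : Equiv.Perm (Fin (2 * k)),
    ((Equiv.Perm.sign σ : ℤ) : K) *
      ∏ i : Fin k,
        Ω (v (σ ⟨2 * i.1, by have := i.2; omega⟩)) (v (σ ⟨2 * i.1 + 1, by have := i.2; omega⟩))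

/-- The restriction of `Ω^k` to the subspace `C` vanishes. -/
def restrZero {K M : Type*} [Field K] [AddCommGroup M] [Module K M]
    (Ω : M →ₗ[K] M →ₗ[K] K) (k : ℕ) (C : Submodule K M) : Prop :=
  ∀ v : Fin (2 * k) → M, (∀ i, v i ∈ C) → wedgePow Ω k v = 0

set_option maxHeartbeats 1000000

namespace SympAux

def eIdx {m : ℕ} (i : Fin m) : Fin (2 * m) := ⟨2 * i.1, by have := i.2; omega⟩
def oIdx {m : ℕ} (i : Fin m) : Fin (2 * m) := ⟨2 * i.1 + 1, by have := i.2; omega⟩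

@[simp] lemma eIdx_val {m : ℕ} (i : Fin m) : (eIdx i : Fin (2*m)).1 = 2 * i.1 := rfl
@[simp] lemma oIdx_val {m : ℕ} (i : Fin m) : (oIdx i : Fin (2*m)).1 = 2 * i.1 + 1 := rfl

lemma eIdx_ne_oIdx {m : ℕ} (i j : Fin m) : (eIdx i : Fin (2*m)) ≠ oIdx j := by
  intro h; have := congrArg Fin.val h; simp at this; omega

variable {M : Type*} [AddCommGroup M] [Module ℂ M] (Ω : M →ₗ[ℂ] M →ₗ[ℂ] ℂ)

lemma wedgePow_eq (m : ℕ) (v : Fin (2 * m) → M) :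
    wedgePow Ω m v = ∑ σ : Equiv.Perm (Fin (2 * m)),
      ((Equiv.Perm.sign σ : ℤ) : ℂ) * ∏ i : Fin m, Ω (v (σ (eIdx i))) (v (σ (oIdx i))) := rfl

lemma mem_sympCompl_iff {v : M} {C : Submodule ℂ M} :
    v ∈ sympCompl Ω C ↔ ∀ w ∈ C, Ω v w = 0 := Iff.rfl

lemma term_linear (m : ℕ) (σ : Equiv.Perm (Fin (2 * m))) (v : Fin (2 * m) → M)
    (j : Fin (2 * m)) :
    ∃ φ : M →ₗ[ℂ] ℂ, ∀ x : M,
      (∏ i : Fin m, Ω (Function.update v j x (σ (eIdx i))) (Function.update v j x (σ (oIdx i))))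
        = φ x := by
  classical
  let F : M → Fin m → ℂ := fun x i =>
    Ω (Function.update v j x (σ (eIdx i))) (Function.update v j x (σ (oIdx i)))
  set p : Fin (2 * m) := σ.symm j with hp
  have hσp : σ p = j := σ.apply_symm_apply j
  have hinj : ∀ a : Fin (2 * m), σ a = j ↔ a = p := by
    intro a
    constructor
    · intro h; rw [hp, ← h, Equiv.symm_apply_apply]
    · intro h; rw [h, hσp]
  have hplt : p.1 < 2 * m := p.2
  set i0 : Fin m := ⟨p.1 / 2, by omega⟩ with hi0
  have hval : (i0 : ℕ) = p.1 / 2 := rfl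
  have hcases : p = eIdx i0 ∨ p = oIdx i0 := by
    rcases Nat.even_or_odd p.1 with h | h
    · obtain ⟨t, ht⟩ := h
      left; apply Fin.ext; simp only [eIdx_val]; omega
    · obtain ⟨t, ht⟩ := h
      right; apply Fin.ext; simp only [oIdx_val]; omega
  have hkey : ∀ i : Fin m, i ≠ i0 → σ (eIdx i) ≠ j ∧ σ (oIdx i) ≠ j := by
    intro i hi
    constructor
    · rw [Ne, hinj]
      intro h
      rcases hcases with hc | hc <;> rw [hc] at h <;> have := congrArg Fin.val h <;>
          simp only [eIdx_val, oIdx_val] at this <;>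
        · apply hi; apply Fin.ext; omega
    · rw [Ne, hinj]
      intro h
      rcases hcases with hc | hc <;> rw [hc] at h <;> have := congrArg Fin.val h <;>
          simp only [eIdx_val, oIdx_val] at this <;>
        · apply hi; apply Fin.ext; omega
  set c : ℂ := ∏ i ∈ Finset.univ.erase i0, Ω (v (σ (eIdx i))) (v (σ (oIdx i))) with hc
  have herase : ∀ x : M, (∏ i ∈ Finset.univ.erase i0, F x i) = c := by
    intro x
    apply Finset.prod_congr rfl
    intro i hi
    have hi' := Finset.ne_of_mem_erase hi
    show Ω (Function.update v j x (σ (eIdx i))) (Function.update v j x (σ (oIdx i))) = _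
    rw [Function.update_of_ne (hkey i hi').1, Function.update_of_ne (hkey i hi').2]
  have hsplit : ∀ x : M, (∏ i : Fin m, F x i) = F x i0 * c := by
    intro x
    rw [← herase x]
    exact (Finset.mul_prod_erase Finset.univ (F x) (Finset.mem_univ i0)).symm
  have heo : (eIdx i0 : Fin (2 * m)) ≠ oIdx i0 := eIdx_ne_oIdx i0 i0
  rcases hcases with hc0 | hc0
  · have h1 : σ (eIdx i0) = j := by rw [hinj, hc0]
    have h2 : σ (oIdx i0) ≠ j := by rw [Ne, hinj, hc0]; exact fun h => heo h.symm
    refine ⟨c • (Ω.flip (v (σ (oIdx i0)))), fun x => ?_⟩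
    rw [hsplit x]
    show Ω (Function.update v j x (σ (eIdx i0))) (Function.update v j x (σ (oIdx i0))) * c = _
    rw [Function.update_of_ne h2, h1, Function.update_self, LinearMap.smul_apply,
      LinearMap.flip_apply, smul_eq_mul, mul_comm]
  · have h1 : σ (oIdx i0) = j := by rw [hinj, hc0]
    have h2 : σ (eIdx i0) ≠ j := by rw [Ne, hinj, hc0]; exact heo
    refine ⟨c • (Ω (v (σ (eIdx i0)))), fun x => ?_⟩
    rw [hsplit x]
    show Ω (Function.update v j x (σ (eIdx i0))) (Function.update v j x (σ (oIdx i0))) * c = _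
    rw [Function.update_of_ne h2, h1, Function.update_self, LinearMap.smul_apply,
      smul_eq_mul, mul_comm]

lemma wedgePow_linear (m : ℕ) (v : Fin (2 * m) → M) (j : Fin (2 * m)) :
    ∃ φ : M →ₗ[ℂ] ℂ, ∀ x : M, wedgePow Ω m (Function.update v j x) = φ x := by
  choose φσ hφσ using fun σ => term_linear Ω m σ v j
  refine ⟨∑ σ : Equiv.Perm (Fin (2 * m)), ((Equiv.Perm.sign σ : ℤ) : ℂ) • φσ σ, fun x => ?_⟩
  rw [wedgePow_eq]
  rw [LinearMap.sum_apply]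
  refine Finset.sum_congr rfl fun σ _ => ?_
  rw [hφσ σ x, LinearMap.smul_apply, smul_eq_mul]

lemma wedgePow_eq_zero_of_eq (m : ℕ) (v : Fin (2 * m) → M) (a b : Fin (2 * m))
    (hv : v a = v b) (hab : a ≠ b) : wedgePow Ω m v = 0 := by
  classical
  set τ := Equiv.swap a b with hτ
  have hvτ : ∀ p, v (τ p) = v p := by
    intro p
    rcases eq_or_ne p a with h | h
    · rw [h]; simp [hτ, Equiv.swap_apply_left, hv]
    rcases eq_or_ne p b with h' | h'
    · rw [h']; simp [hτ, Equiv.swap_apply_right, hv]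
    · rw [hτ]; rw [Equiv.swap_apply_of_ne_of_ne h h']
  have key : wedgePow Ω m v = - wedgePow Ω m v := by
    conv_lhs => rw [wedgePow_eq]
    rw [wedgePow_eq, ← Finset.sum_neg_distrib]
    refine Fintype.sum_equiv (Equiv.mulLeft τ) _ _ ?_
    intro σ
    rw [Equiv.coe_mulLeft]
    have hsign : Equiv.Perm.sign (τ * σ) = - Equiv.Perm.sign σ := by
      rw [Equiv.Perm.sign_mul, Equiv.Perm.sign_swap hab, neg_one_mul]
    have hprod : (∏ i : Fin m, Ω (v ((τ * σ) (eIdx i))) (v ((τ * σ) (oIdx i))))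
        = ∏ i : Fin m, Ω (v (σ (eIdx i))) (v (σ (oIdx i))) := by
      refine Finset.prod_congr rfl fun i _ => ?_
      rw [Equiv.Perm.mul_apply, Equiv.Perm.mul_apply, hvτ, hvτ]
    rw [hprod, hsign]
    push_cast
    ring
  have h2 : wedgePow Ω m v + wedgePow Ω m v = 0 := add_eq_zero_iff_eq_neg.mpr key
  have h3 : (2 : ℂ) * wedgePow Ω m v = 0 := by rw [two_mul]; exact h2
  rcases mul_eq_zero.mp h3 with h | h
  · norm_num at h
  · exact h

noncomputable def wedgeAlt (m : ℕ) : M [⋀^(Fin (2 * m))]→ₗ[ℂ] ℂ where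
  toFun := wedgePow Ω m
  map_update_add' := by
    intro dec v j x y
    rw [Subsingleton.elim dec (instDecidableEqFin (2 * m))]
    obtain ⟨φ, hφ⟩ := wedgePow_linear Ω m v j
    rw [hφ, hφ, hφ]; exact map_add φ x y
  map_update_smul' := by
    intro dec v j c x
    rw [Subsingleton.elim dec (instDecidableEqFin (2 * m))]
    obtain ⟨φ, hφ⟩ := wedgePow_linear Ω m v j
    rw [hφ, hφ]; exact map_smul φ c x
  map_eq_zero_of_eq' := by
    intro v a b hv hab
    exact wedgePow_eq_zero_of_eq Ω m v a b hv hab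

lemma wedgePow_eq_zero_of_dep (m : ℕ) (v : Fin (2 * m) → M)
    (h : ¬ LinearIndependent ℂ v) : wedgePow Ω m v = 0 :=
  (wedgeAlt Ω m).map_linearDependent v h

variable [FiniteDimensional ℂ M]

lemma finrank_sympCompl (hnd : ∀ v, (∀ w, Ω v w = 0) → v = 0) (C' : Submodule ℂ M) :
    finrank ℂ (sympCompl Ω C') = finrank ℂ M - finrank ℂ C' := by
  classical
  let f : M →ₗ[ℂ] Module.Dual ℂ C' := C'.subtype.dualMap.comp Ω
  have hker : LinearMap.ker f = sympCompl Ω C' := by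
    ext v
    simp only [LinearMap.mem_ker, mem_sympCompl_iff]
    constructor
    · intro h w hw
      have := DFunLike.congr_fun h ⟨w, hw⟩
      simpa [f] using this
    · intro h
      apply LinearMap.ext
      rintro ⟨w, hw⟩
      simpa [f] using h w hw
  have hΩinj : Function.Injective Ω := by
    rw [← LinearMap.ker_eq_bot, eq_bot_iff]
    intro v hv
    rw [LinearMap.mem_ker] at hv
    have : v = 0 := hnd v (fun w => by rw [hv]; rfl)
    simpa [this]
  have hsurj : Function.Surjective f := by
    have hΩs : Function.Surjective (Ω : M →ₗ[ℂ] Module.Dual ℂ M) :=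
      (LinearMap.injective_iff_surjective_of_finrank_eq_finrank
        (by rw [Subspace.dual_finrank_eq])).mp hΩinj
    exact (LinearMap.dualMap_surjective_of_injective C'.injective_subtype).comp hΩs
  have h1 := LinearMap.finrank_range_add_finrank_ker f
  rw [LinearMap.range_eq_top.mpr hsurj, finrank_top, hker, Subspace.dual_finrank_eq] at h1
  have h2 : finrank ℂ C' ≤ finrank ℂ M := Submodule.finrank_le C'
  omega

lemma exists_hyperbolic (halt : ∀ v, Ω v v = 0) (hskew : ∀ a b, Ω a b = -Ω b a) :
    ∀ N : ℕ, ∀ C' : Submodule ℂ M, finrank ℂ C' = N →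
    ∃ (m : ℕ) (x y : Fin m → M),
      N = 2 * m + finrank ℂ (C' ⊓ sympCompl Ω C' : Submodule ℂ M) ∧
      (∀ i, x i ∈ C') ∧ (∀ i, y i ∈ C') ∧
      (∀ i j, Ω (x i) (x j) = 0) ∧ (∀ i j, Ω (y i) (y j) = 0) ∧
      (∀ i j, Ω (x i) (y j) = if i = j then 1 else 0) := by
  intro N
  induction N using Nat.strong_induction_on with
  | _ N ih =>
  intro C' hCN
  by_cases hr : C' ≤ sympCompl Ω C'
  · refine ⟨0, (fun i => i.elim0), (fun i => i.elim0), ?_, fun i => i.elim0, fun i => i.elim0,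
      fun i => i.elim0, fun i => i.elim0, fun i => i.elim0⟩
    rw [inf_eq_left.mpr hr, hCN]
    omega
  · obtain ⟨x, hxC, hxn⟩ := SetLike.not_le_iff_exists.mp hr
    rw [mem_sympCompl_iff] at hxn
    push_neg at hxn
    obtain ⟨y0, hy0C, hy0⟩ := hxn
    set y := (Ω x y0)⁻¹ • y0 with hydef
    have hyC : y ∈ C' := C'.smul_mem _ hy0C
    have hΩxy : Ω x y = 1 := by
      rw [hydef, map_smul, smul_eq_mul, inv_mul_cancel₀ hy0]
    have hΩyx : Ω y x = -1 := by rw [hskew, hΩxy]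
    set C'' := C' ⊓ LinearMap.ker (Ω x) ⊓ LinearMap.ker (Ω y) with hC''def
    have hmem : ∀ z, z ∈ C'' ↔ z ∈ C' ∧ Ω x z = 0 ∧ Ω y z = 0 := by
      intro z
      simp [hC''def, Submodule.mem_inf, LinearMap.mem_ker, and_assoc]
    have hC''C : C'' ≤ C' := le_trans inf_le_left inf_le_left
    have hdecomp : ∀ w ∈ C', ∃ a b : ℂ, ∃ w'' ∈ C'', w = a • x + b • y + w'' := by
      intro w hw
      refine ⟨-(Ω y w), Ω x w, w - (-(Ω y w)) • x - (Ω x w) • y, ?_, by abel⟩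
      rw [hmem]
      refine ⟨sub_mem (sub_mem hw (C'.smul_mem _ hxC)) (C'.smul_mem _ hyC), ?_, ?_⟩
      · simp only [map_sub, map_smul, smul_eq_mul, halt x, hΩxy]
        ring
      · simp only [map_sub, map_smul, smul_eq_mul, halt y, hΩyx]
        ring
    have hC''le : finrank ℂ C' ≤ 2 + finrank ℂ C'' := by
      classical
      set g : C' →ₗ[ℂ] ℂ × ℂ :=
        LinearMap.prod ((Ω x).comp C'.subtype) ((Ω y).comp C'.subtype) with hg
      have hkg : LinearMap.ker g = C''.comap C'.subtype := by
        ext z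
        simp [hg, LinearMap.mem_ker, LinearMap.prod_apply, Prod.ext_iff, hmem z.1,
          Submodule.mem_comap, z.2]
      have hfr1 : finrank ℂ C'' = finrank ℂ (LinearMap.ker g) := by
        rw [hkg, ← Submodule.finrank_map_subtype_eq C' (C''.comap C'.subtype),
          Submodule.map_comap_subtype, inf_of_le_right hC''C]
      have h1 := LinearMap.finrank_range_add_finrank_ker g
      have h2 : finrank ℂ (LinearMap.range g) ≤ 2 := by
        have := Submodule.finrank_le (LinearMap.range g)
        simpa using this
      omega
    have hdisj : Submodule.span ℂ ({x, y} : Set M) ⊓ C'' = ⊥ := by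
      rw [eq_bot_iff]
      rintro z hz
      rw [Submodule.mem_inf] at hz
      obtain ⟨hz1, hz2⟩ := hz
      obtain ⟨a, b, hab⟩ := Submodule.mem_span_pair.mp hz1
      rw [hmem] at hz2
      have hb : Ω x z = b := by
        rw [← hab]
        simp [map_add, map_smul, halt x, hΩxy, smul_eq_mul]
      have ha : Ω y z = -a := by
        rw [← hab]
        simp only [map_add, map_smul, halt y, hΩyx, smul_eq_mul]
        ring
      rw [hz2.2.1] at hb
      rw [hz2.2.2] at ha
      have ha' : a = 0 := by rw [eq_comm, neg_eq_zero] at ha; exact ha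
      rw [Submodule.mem_bot, ← hab, ha', ← hb]
      simp
    have hsup : Submodule.span ℂ ({x, y} : Set M) ⊔ C'' = C' := by
      apply le_antisymm
      · refine sup_le ?_ hC''C
        rw [Submodule.span_le]
        intro z hz
        rcases hz with h | h
        · rwa [h]
        · rw [Set.mem_singleton_iff.mp h]; exact hyC
      · intro w hw
        obtain ⟨a, b, w'', hw'', heq⟩ := hdecomp w hw
        rw [heq]
        refine Submodule.add_mem _ (Submodule.add_mem _ ?_ ?_) (Submodule.mem_sup_right hw'')
        · exact Submodule.mem_sup_left (Submodule.smul_mem _ _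
            (Submodule.subset_span (by simp)))
        · exact Submodule.mem_sup_left (Submodule.smul_mem _ _
            (Submodule.subset_span (by simp)))
    have hspanle : finrank ℂ (Submodule.span ℂ ({x, y} : Set M)) = 2 := by
      have hLI : LinearIndependent ℂ ![x, y] := by
        rw [LinearIndependent.pair_iff]
        intro s t hst
        have h1 := congrArg (Ω x) hst
        have h2 := congrArg (Ω y) hst
        simp only [map_add, map_smul, smul_eq_mul, halt x, halt y, hΩxy, hΩyx, map_zero] at h1 h2
        constructor
        · have : -s = 0 := by rw [← h2]; ring
          rwa [neg_eq_zero] at this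
        · rw [← h1]; ring
      have h := finrank_span_eq_card hLI
      rwa [Matrix.range_cons_cons_empty] at h
    have hfrsum : finrank ℂ (Submodule.span ℂ ({x, y} : Set M)) + finrank ℂ C''
        = finrank ℂ C' := by
      have h := Submodule.finrank_sup_add_finrank_inf_eq
        (Submodule.span ℂ ({x, y} : Set M)) C''
      rw [hdisj, hsup] at h
      simp only [finrank_bot] at h
      omega
    have hN2 : N = 2 + finrank ℂ C'' := by omega
    have hrad : C'' ⊓ sympCompl Ω C'' = C' ⊓ sympCompl Ω C' := by
      apply le_antisymm
      · rintro z hz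
        rw [Submodule.mem_inf] at hz ⊢
        obtain ⟨hz1, hz2⟩ := hz
        refine ⟨hC''C hz1, ?_⟩
        rw [mem_sympCompl_iff]
        intro w hw
        obtain ⟨a, b, w'', hw'', heq⟩ := hdecomp w hw
        rw [hmem] at hz1
        have hzx : Ω z x = 0 := by rw [hskew, hz1.2.1]; ring
        have hzy : Ω z y = 0 := by rw [hskew, hz1.2.2]; ring
        rw [heq]
        simp only [map_add, map_smul, smul_eq_mul, hzx, hzy]
        rw [(mem_sympCompl_iff Ω).mp hz2 w'' hw'']
        ring
      · rintro z hz
        rw [Submodule.mem_inf] at hz ⊢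
        obtain ⟨hz1, hz2⟩ := hz
        rw [mem_sympCompl_iff] at hz2
        constructor
        · rw [hmem]
          refine ⟨hz1, ?_, ?_⟩
          · rw [hskew, hz2 x hxC]; ring
          · rw [hskew, hz2 y hyC]; ring
        · rw [mem_sympCompl_iff]
          intro w hw
          exact hz2 w (hC''C hw)
    have hlt : finrank ℂ C'' < N := by omega
    obtain ⟨m', xo, yo, hcount, hxoC, hyoC, hxx, hyy, hxy⟩ := ih (finrank ℂ C'') hlt C'' rfl
    have hxz : ∀ z ∈ C'', Ω x z = 0 := fun z hz => ((hmem z).mp hz).2.1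
    have hyz : ∀ z ∈ C'', Ω y z = 0 := fun z hz => ((hmem z).mp hz).2.2
    refine ⟨m' + 1, Fin.cons x xo, Fin.cons y yo, ?_, ?_, ?_, ?_, ?_, ?_⟩
    · rw [← hrad]
      omega
    · intro i
      refine Fin.cases ?_ ?_ i
      · simpa using hxC
      · intro j; simpa using hC''C (hxoC j)
    · intro i
      refine Fin.cases ?_ ?_ i
      · simpa using hyC
      · intro j; simpa using hC''C (hyoC j)
    · intro i j
      refine Fin.cases ?_ ?_ i
      · refine Fin.cases ?_ ?_ j
        · rw [Fin.cons_zero]; exact halt x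
        · intro j'; rw [Fin.cons_zero, Fin.cons_succ]; exact hxz _ (hxoC j')
      · intro i'
        refine Fin.cases ?_ ?_ j
        · rw [Fin.cons_succ, Fin.cons_zero, hskew, hxz _ (hxoC i'), neg_zero]
        · intro j'; rw [Fin.cons_succ, Fin.cons_succ]; exact hxx i' j'
    · intro i j
      refine Fin.cases ?_ ?_ i
      · refine Fin.cases ?_ ?_ j
        · rw [Fin.cons_zero]; exact halt y
        · intro j'; rw [Fin.cons_zero, Fin.cons_succ]; exact hyz _ (hyoC j')
      · intro i'
        refine Fin.cases ?_ ?_ j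
        · rw [Fin.cons_succ, Fin.cons_zero, hskew, hyz _ (hyoC i'), neg_zero]
        · intro j'; rw [Fin.cons_succ, Fin.cons_succ]; exact hyy i' j'
    · intro i j
      refine Fin.cases ?_ ?_ i
      · refine Fin.cases ?_ ?_ j
        · rw [Fin.cons_zero, Fin.cons_zero, if_pos rfl]; exact hΩxy
        · intro j'
          rw [Fin.cons_zero, Fin.cons_succ, if_neg (Ne.symm (Fin.succ_ne_zero j'))]
          exact hxz _ (hyoC j')
      · intro i'
        refine Fin.cases ?_ ?_ j
        · rw [Fin.cons_succ, Fin.cons_zero, if_neg (Fin.succ_ne_zero i'), hskew,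
            hyz _ (hxoC i'), neg_zero]
        · intro j'
          rw [Fin.cons_succ, Fin.cons_succ, hxy i' j']
          by_cases h : i' = j'
          · rw [if_pos h, if_pos (by rw [h])]
          · rw [if_neg h, if_neg (fun hc => h (Fin.succ_inj.mp hc))]
lemma eIdx_inj {m : ℕ} {i j : Fin m} (h : (eIdx i : Fin (2*m)) = eIdx j) : i = j := by
  have := congrArg Fin.val h; simp only [eIdx_val] at this; exact Fin.ext (by omega)

lemma oIdx_inj {m : ℕ} {i j : Fin m} (h : (oIdx i : Fin (2*m)) = oIdx j) : i = j := by
  have := congrArg Fin.val h; simp only [oIdx_val] at this; exact Fin.ext (by omega)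

def pairEquiv (m : ℕ) : Fin m × Bool ≃ Fin (2 * m) where
  toFun p := ⟨2 * p.1.1 + (if p.2 then 1 else 0), by
    rcases p with ⟨⟨i, hi⟩, b⟩; dsimp; split <;> omega⟩
  invFun q := (⟨q.1 / 2, by have := q.2; omega⟩, decide (q.1 % 2 = 1))
  left_inv := by
    rintro ⟨⟨i, hi⟩, b⟩
    cases b <;> refine Prod.ext (Fin.ext ?_) ?_ <;>
      simp [Nat.mul_add_mod, Nat.mul_mod_right] <;> omega
  right_inv := by
    rintro ⟨q, hq⟩
    refine Fin.ext ?_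
    dsimp
    by_cases h : q % 2 = 1 <;> simp [h] <;> omega

lemma pairEquiv_false (m : ℕ) (i : Fin m) : pairEquiv m (i, false) = eIdx i := by
  apply Fin.ext; simp [pairEquiv, eIdx]

lemma pairEquiv_true (m : ℕ) (i : Fin m) : pairEquiv m (i, true) = oIdx i := by
  apply Fin.ext; simp [pairEquiv, oIdx]

def interleave {m : ℕ} (x y : Fin m → M) : Fin (2 * m) → M := fun q =>
  if ((pairEquiv m).symm q).2 then y ((pairEquiv m).symm q).1 else x ((pairEquiv m).symm q).1

lemma interleave_eIdx {m : ℕ} (x y : Fin m → M) (i : Fin m) :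
    interleave x y (eIdx i) = x i := by
  rw [interleave, ← pairEquiv_false, Equiv.symm_apply_apply]
  simp

lemma interleave_oIdx {m : ℕ} (x y : Fin m → M) (i : Fin m) :
    interleave x y (oIdx i) = y i := by
  rw [interleave, ← pairEquiv_true, Equiv.symm_apply_apply]
  simp

noncomputable def phi (m : ℕ) (ρ : Equiv.Perm (Fin m)) (ε : Fin m → Bool) :
    Equiv.Perm (Fin (2 * m)) :=
  (pairEquiv m).permCongr
    (Equiv.prodShear ρ (fun i => if ε i then Equiv.swap false true else Equiv.refl Bool))

lemma phi_apply (m : ℕ) (ρ : Equiv.Perm (Fin m)) (ε : Fin m → Bool) (i : Fin m) (b : Bool) :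
    phi m ρ ε (pairEquiv m (i, b)) = pairEquiv m (ρ i, if ε i then !b else b) := by
  rw [phi, Equiv.permCongr_apply, Equiv.symm_apply_apply]
  congr 1
  cases b <;> by_cases h : ε i <;> simp [Equiv.prodShear, h]

lemma phi_injective (m : ℕ) :
    Function.Injective (fun p : Equiv.Perm (Fin m) × (Fin m → Bool) => phi m p.1 p.2) := by
  rintro ⟨ρ, ε⟩ ⟨ρ', ε'⟩ h
  simp only at h
  have h' : ∀ i : Fin m, (ρ i, if ε i then (!false) else false)
      = (ρ' i, if ε' i then (!false) else false) := by
    intro i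
    have := congrArg (fun σ : Equiv.Perm (Fin (2*m)) => σ (pairEquiv m (i, false))) h
    simp only [phi_apply] at this
    exact (pairEquiv m).injective this
  have hρ : ρ = ρ' := by
    apply Equiv.ext; intro i; exact (Prod.ext_iff.mp (h' i)).1
  have hε : ε = ε' := by
    funext i
    have := (Prod.ext_iff.mp (h' i)).2
    cases hεi : ε i <;> cases hεi' : ε' i <;> rw [hεi, hεi'] at this <;> simp_all
  rw [hρ, hε]

lemma phi_sign (m : ℕ) (ρ : Equiv.Perm (Fin m)) (ε : Fin m → Bool) :
    Equiv.Perm.sign (phi m ρ ε)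
      = (-1) ^ (Finset.univ.filter (fun i => ε i = true)).card := by
  classical
  rw [phi, Equiv.Perm.sign_permCongr]
  have hdecomp : Equiv.prodShear ρ (fun i => if ε i then Equiv.swap false true else Equiv.refl Bool)
      = ((Equiv.prodCongr ρ (Equiv.refl Bool) : Equiv.Perm (Fin m × Bool))
          * Equiv.prodCongrRight (fun i => if ε i then Equiv.swap false true else 1)) := by
    apply Equiv.ext
    rintro ⟨i, b⟩
    by_cases h : ε i <;>
      simp [Equiv.prodShear, Equiv.prodCongrRight, Equiv.prodCongr, h,
        Equiv.Perm.mul_apply]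
  rw [hdecomp, map_mul]
  have h1 : Equiv.Perm.sign (Equiv.prodCongr ρ (Equiv.refl Bool) : Equiv.Perm (Fin m × Bool)) = 1 := by
    have hA : (Equiv.prodCongr ρ (Equiv.refl Bool) : Equiv.Perm (Fin m × Bool))
        = (Equiv.prodComm Bool (Fin m)).permCongr (Equiv.prodCongrRight (fun _ : Bool => ρ)) := by
      apply Equiv.ext
      rintro ⟨i, b⟩
      rfl
    rw [hA, Equiv.Perm.sign_permCongr, Equiv.Perm.sign_prodCongrRight]
    rw [Fintype.prod_bool]
    exact Int.units_mul_self _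
  have h2 : Equiv.Perm.sign
      (Equiv.prodCongrRight (fun i => if ε i then Equiv.swap false true else (1 : Equiv.Perm Bool)))
      = (-1) ^ (Finset.univ.filter (fun i => ε i = true)).card := by
    rw [Equiv.Perm.sign_prodCongrRight]
    have : ∀ i : Fin m, Equiv.Perm.sign (if ε i then Equiv.swap false true else (1 : Equiv.Perm Bool))
        = if ε i = true then (-1 : ℤˣ) else 1 := by
      intro i
      by_cases h : ε i <;> simp [h, Equiv.Perm.sign_swap]
    rw [Finset.prod_congr rfl (fun i _ => this i), Finset.prod_ite, Finset.prod_const,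
      Finset.prod_const, one_pow, mul_one]
  rw [h1, h2, one_mul]

lemma wedgePow_interleave (hskew : ∀ a b, Ω a b = -Ω b a) (m : ℕ) (x y : Fin m → M)
    (hxx : ∀ i j, Ω (x i) (x j) = 0) (hyy : ∀ i j, Ω (y i) (y j) = 0)
    (hxy : ∀ i j, Ω (x i) (y j) = if i = j then 1 else 0) :
    wedgePow Ω m (interleave x y) = (m.factorial * 2 ^ m : ℂ) := by
  classical
  have hchar : ∀ a b : Fin (2 * m), Ω (interleave x y a) (interleave x y b) ≠ 0 →
      ∃ i : Fin m, (a = eIdx i ∧ b = oIdx i) ∨ (a = oIdx i ∧ b = eIdx i) := by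
    intro a b h
    obtain ⟨⟨ia, ba⟩, rfl⟩ := (pairEquiv m).surjective a
    obtain ⟨⟨ib, bb⟩, rfl⟩ := (pairEquiv m).surjective b
    cases ba <;> cases bb
    · exfalso
      rw [pairEquiv_false, pairEquiv_false, interleave_eIdx, interleave_eIdx, hxx] at h
      exact h rfl
    · rw [pairEquiv_false, pairEquiv_true, interleave_eIdx, interleave_oIdx, hxy] at h
      have : ia = ib := by by_contra hne; rw [if_neg hne] at h; exact h rfl
      exact ⟨ia, Or.inl ⟨by rw [pairEquiv_false], by rw [pairEquiv_true, this]⟩⟩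
    · rw [pairEquiv_true, pairEquiv_false, interleave_oIdx, interleave_eIdx, hskew, hxy] at h
      have : ib = ia := by by_contra hne; rw [if_neg hne] at h; simp at h
      exact ⟨ia, Or.inr ⟨by rw [pairEquiv_true], by rw [pairEquiv_false, this]⟩⟩
    · exfalso
      rw [pairEquiv_true, pairEquiv_true, interleave_oIdx, interleave_oIdx, hyy] at h
      exact h rfl
  rw [wedgePow_eq]
  set vv := interleave x y with hvv
  set T := Finset.univ.image (fun p : Equiv.Perm (Fin m) × (Fin m → Bool) => phi m p.1 p.2)
    with hT
  have hsub : (∑ σ : Equiv.Perm (Fin (2 * m)),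
        ((Equiv.Perm.sign σ : ℤ) : ℂ) * ∏ i : Fin m, Ω (vv (σ (eIdx i))) (vv (σ (oIdx i))))
      = ∑ σ ∈ T, ((Equiv.Perm.sign σ : ℤ) : ℂ) * ∏ i : Fin m, Ω (vv (σ (eIdx i))) (vv (σ (oIdx i))) := by
    refine (Finset.sum_subset (Finset.subset_univ T) ?_).symm
    intro σ _ hσT
    rcases eq_or_ne (∏ i : Fin m, Ω (vv (σ (eIdx i))) (vv (σ (oIdx i)))) 0 with hp | hp
    · rw [hp, mul_zero]
    · exfalso
      apply hσT
      have hfac : ∀ i : Fin m, Ω (vv (σ (eIdx i))) (vv (σ (oIdx i))) ≠ 0 := by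
        intro i h
        exact hp (Finset.prod_eq_zero (Finset.mem_univ i) h)
      have hex : ∀ i : Fin m, ∃ j, (σ (eIdx i) = eIdx j ∧ σ (oIdx i) = oIdx j)
          ∨ (σ (eIdx i) = oIdx j ∧ σ (oIdx i) = eIdx j) := fun i => hchar _ _ (hfac i)
      choose jf hj using hex
      have hjinj : Function.Injective jf := by
        intro i1 i2 h12
        rcases hj i1 with ⟨h1, h2⟩ | ⟨h1, h2⟩ <;> rcases hj i2 with ⟨h3, h4⟩ | ⟨h3, h4⟩
        · exact eIdx_inj (σ.injective (h1.trans ((congrArg eIdx h12).trans h3.symm)))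
        · exact absurd (σ.injective (h1.trans ((congrArg eIdx h12).trans h4.symm)))
            (eIdx_ne_oIdx i1 i2)
        · exact absurd (σ.injective (h1.trans ((congrArg oIdx h12).trans h4.symm)))
            (eIdx_ne_oIdx i1 i2)
        · exact eIdx_inj (σ.injective (h1.trans ((congrArg oIdx h12).trans h3.symm)))
      set ρ := Equiv.ofBijective jf (Finite.injective_iff_bijective.mp hjinj) with hρ
      set ε : Fin m → Bool := fun i => decide (σ (eIdx i) = oIdx (jf i)) with hε
      refine Finset.mem_image.mpr ⟨(ρ, ε), Finset.mem_univ _, ?_⟩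
      apply Equiv.ext
      intro q
      dsimp only
      obtain ⟨⟨i, b⟩, rfl⟩ := (pairEquiv m).surjective q
      rw [phi_apply]
      have hρi : ρ i = jf i := rfl
      cases b
      · rw [pairEquiv_false]
        rcases hj i with ⟨h1, h2⟩ | ⟨h1, h2⟩
        · have hεi : ε i = false := by
            simp only [hε, h1, decide_eq_false_iff_not]
            exact eIdx_ne_oIdx (jf i) (jf i)
          rw [hεi, hρi]
          exact (pairEquiv_false m (jf i)).trans h1.symm
        · have hεi : ε i = true := by simp [hε, h1]
          rw [hεi, hρi]
          exact (pairEquiv_true m (jf i)).trans h1.symm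
      · rw [pairEquiv_true]
        rcases hj i with ⟨h1, h2⟩ | ⟨h1, h2⟩
        · have hεi : ε i = false := by
            simp only [hε, h1, decide_eq_false_iff_not]
            exact eIdx_ne_oIdx (jf i) (jf i)
          rw [hεi, hρi]
          exact (pairEquiv_true m (jf i)).trans h2.symm
        · have hεi : ε i = true := by simp [hε, h1]
          rw [hεi, hρi]
          exact (pairEquiv_false m (jf i)).trans h2.symm
  rw [hsub, Finset.sum_image (by intro p _ q _ h; exact phi_injective m (by
    rcases p with ⟨p1, p2⟩; rcases q with ⟨q1, q2⟩; exact h))]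
  have hterm : ∀ p : Equiv.Perm (Fin m) × (Fin m → Bool),
      ((Equiv.Perm.sign (phi m p.1 p.2) : ℤ) : ℂ)
        * ∏ i : Fin m, Ω (vv (phi m p.1 p.2 (eIdx i))) (vv (phi m p.1 p.2 (oIdx i))) = 1 := by
    rintro ⟨ρ, ε⟩
    have hprod : (∏ i : Fin m, Ω (vv (phi m ρ ε (eIdx i))) (vv (phi m ρ ε (oIdx i))))
        = ∏ i : Fin m, (if ε i = true then (-1 : ℂ) else 1) := by
      refine Finset.prod_congr rfl fun i _ => ?_
      rw [← pairEquiv_false m i, ← pairEquiv_true m i, phi_apply, phi_apply]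
      by_cases h : ε i
      · rw [if_pos h, if_pos h, if_pos (by rw [h])]
        simp only [Bool.not_false, Bool.not_true]
        rw [pairEquiv_true, pairEquiv_false, hvv, interleave_oIdx, interleave_eIdx,
          hskew, hxy, if_pos rfl]
      · rw [if_neg h, if_neg h, if_neg (by simpa using h)]
        rw [pairEquiv_false, pairEquiv_true, hvv, interleave_eIdx, interleave_oIdx,
          hxy, if_pos rfl]
    dsimp only
    rw [hprod, phi_sign]
    have hpr : (∏ i : Fin m, (if ε i = true then (-1 : ℂ) else 1))
        = (-1 : ℂ) ^ (Finset.univ.filter (fun i => ε i = true)).card := by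
      rw [Finset.prod_ite, Finset.prod_const, Finset.prod_const, one_pow, mul_one]
    rw [hpr]
    push_cast
    rw [← mul_pow]
    norm_num
  rw [Finset.sum_congr rfl (fun p _ => hterm p), Finset.sum_const, Finset.card_univ]
  rw [Fintype.card_prod, Fintype.card_perm, Fintype.card_fun]
  simp [Fintype.card_fin, Fintype.card_bool, mul_comm]

end SympAux

/-- For a subspace `C` of dimension `n+k` in a `2n`-dimensional symplectic vector space:
`Ω^k|_C` is nonzero, and `Ω^(k+1)|_C = 0` iff `C` is coisotropic. -/
theorem stmt1 {M : Type*} [AddCommGroup M] [Module ℂ M] [FiniteDimensional ℂ M]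
    (n k : ℕ) (Ω : M →ₗ[ℂ] M →ₗ[ℂ] ℂ)
    (halt : ∀ v, Ω v v = 0)
    (hnd : ∀ v, (∀ w, Ω v w = 0) → v = 0)
    (h2n : finrank ℂ M = 2 * n)
    (C : Submodule ℂ M) (hk : k ≤ n) (hC : finrank ℂ C = n + k) :
    (¬ restrZero Ω k C) ∧ (restrZero Ω (k + 1) C ↔ sympCompl Ω C ≤ C) := by
  classical
  have hskew : ∀ a b : M, Ω a b = -Ω b a := by
    intro a b
    have h := halt (a + b)
    simp only [map_add, LinearMap.add_apply, halt a, halt b] at h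
    linear_combination h
  have hdim : finrank ℂ (sympCompl Ω C) = n - k := by
    rw [SympAux.finrank_sympCompl Ω hnd C, h2n, hC]
    omega
  obtain ⟨m, xx, yy, hcount, hxC, hyC, hxx, hyy, hxy⟩ :=
    SympAux.exists_hyperbolic Ω halt hskew (n + k) C hC
  have hradle : finrank ℂ (C ⊓ sympCompl Ω C : Submodule ℂ M) ≤ n - k := by
    rw [← hdim]
    exact Submodule.finrank_mono inf_le_right
  have hnz : ∀ r : ℕ, r ≤ m → ¬ restrZero Ω r C := by
    intro r hrm hzero
    set xr : Fin r → M := fun i => xx (Fin.castLE hrm i) with hxr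
    set yr : Fin r → M := fun i => yy (Fin.castLE hrm i) with hyr
    have hval := SympAux.wedgePow_interleave Ω hskew r xr yr
      (fun i j => hxx _ _) (fun i j => hyy _ _)
      (fun i j => by
        rw [hxr, hyr]
        dsimp only
        rw [hxy]
        by_cases h : i = j
        · rw [if_pos h, if_pos (by rw [h])]
        · rw [if_neg h, if_neg (fun hc => h (Fin.castLE_injective hrm hc))])
    have hmem : ∀ q, SympAux.interleave xr yr q ∈ C := by
      intro q
      rw [SympAux.interleave]
      split
      · exact hyC _
      · exact hxC _
    have h0 := hzero _ hmem
    rw [h0] at hval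
    have h1 : ((r.factorial : ℂ)) ≠ 0 := Nat.cast_ne_zero.mpr (Nat.factorial_ne_zero r)
    have h2 : ((2 : ℂ)) ^ r ≠ 0 := pow_ne_zero _ two_ne_zero
    exact (mul_ne_zero h1 h2) hval.symm
  refine ⟨hnz k (by omega), ⟨fun hz => ?_, fun hco => ?_⟩⟩
  · by_contra hnle
    have hne : C ⊓ sympCompl Ω C ≠ sympCompl Ω C := fun he => hnle (inf_eq_right.mp he)
    have hlt := Submodule.finrank_lt_finrank_of_lt (lt_of_le_of_ne inf_le_right hne)
    rw [hdim] at hlt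
    exact hnz (k + 1) (by omega) hz
  · intro v hv
    set R' : Submodule ℂ C := (sympCompl Ω C).comap C.subtype with hR'
    obtain ⟨W', hW'⟩ := Submodule.exists_isCompl R'
    have hfrR' : finrank ℂ R' = n - k := by
      have hmap : R'.map C.subtype = sympCompl Ω C := by
        rw [hR', Submodule.map_comap_subtype, inf_of_le_right hco]
      rw [← Submodule.finrank_map_subtype_eq, hmap, hdim]
    have hsum := Submodule.finrank_add_eq_of_isCompl hW'
    rw [hC, hfrR'] at hsum
    have hfrW' : finrank ℂ W' = 2 * k := by omega
    set π := W'.linearProjOfIsCompl R' hW'.symm with hπ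
    set u : Fin (2 * (k + 1)) → M := fun a => ((π ⟨v a, hv a⟩ : C) : M) with hu
    have humem : ∀ a, u a ∈ W'.map C.subtype := by
      intro a
      exact Submodule.mem_map.mpr ⟨((π ⟨v a, hv a⟩ : W') : C), SetLike.coe_mem _, rfl⟩
    have huC : ∀ a, u a ∈ C := fun a => SetLike.coe_mem _
    have hdecomp2 : ∀ a, ∃ w, w ∈ sympCompl Ω C ∧ v a = u a + w := by
      intro a
      refine ⟨((R'.linearProjOfIsCompl W' hW'.symm.symm ⟨v a, hv a⟩ : C) : M), ?_, ?_⟩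
      · exact Submodule.mem_comap.mp
          (SetLike.coe_mem (R'.linearProjOfIsCompl W' hW'.symm.symm ⟨v a, hv a⟩))
      · have h := Submodule.projection_add_projection_eq_self hW'.symm
          (⟨v a, hv a⟩ : C)
        have h2 := congrArg (Subtype.val : C → M) h
        rw [Submodule.coe_add] at h2
        exact h2.symm
    choose rr hrrmem hrreq using hdecomp2
    have hΩu : ∀ a b, Ω (v a) (v b) = Ω (u a) (u b) := by
      intro a b
      rw [hrreq a, hrreq b]
      have h2 : Ω (u a) (rr b) = 0 := by
        rw [hskew, hrrmem b _ (huC a), neg_zero]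
      simp only [map_add, LinearMap.add_apply]
      rw [h2, hrrmem a _ (huC b), hrrmem a _ (hco (hrrmem b))]
      ring
    have hvu : wedgePow Ω (k + 1) v = wedgePow Ω (k + 1) u := by
      rw [SympAux.wedgePow_eq, SympAux.wedgePow_eq]
      refine Finset.sum_congr rfl fun σ _ => ?_
      congr 1
      exact Finset.prod_congr rfl fun i _ => hΩu _ _
    rw [hvu]
    refine SympAux.wedgePow_eq_zero_of_dep Ω (k + 1) u ?_
    intro hLI
    have hLI' : LinearIndependent ℂ (fun a : Fin (2 * (k + 1)) =>
        (⟨u a, humem a⟩ : W'.map C.subtype)) := by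
      apply LinearIndependent.of_comp (W'.map C.subtype).subtype
      exact hLI
    have hcard := hLI'.fintype_card_le_finrank
    rw [Fintype.card_fin] at hcard
    have hWM : finrank ℂ (W'.map C.subtype) = 2 * k := by
      rw [Submodule.finrank_map_subtype_eq]
      exact hfrW'
    omega
end

section
/- Let M be a symplectic vector space with symplectic form Ω, let D ⊆ M be a coisotropic subspace, and let C ⊆ M be a Lagrangian subspace. Then (C ∩ D) + D⊥ is a Lagrangian subspace of M. -/
open Module

/-! Since `Ω` is alternating and nondegenerate on a finite-dimensional space, `V ↦ V⊥` is an
inclusion-reversing involution, so it exchanges `⊓` and `⊔`. Hence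
`((C ⊓ D) ⊔ D⊥)⊥ = (C⊥ ⊔ D⊥) ⊓ D = (C ⊔ D⊥) ⊓ D`, and the modular law turns this back into
`(C ⊓ D) ⊔ D⊥` because `D⊥ ≤ D`. -/

section SympCompl

variable {K M : Type*} [Field K] [AddCommGroup M] [Module K M] {Ω : M →ₗ[K] M →ₗ[K] K}

theorem sympCompl_eq_comap_dualAnnihilator (V : Submodule K M) :
    sympCompl Ω V = V.dualAnnihilator.comap Ω := by
  ext v
  simp [sympCompl, Submodule.mem_dualAnnihilator]

theorem sympCompl_sup (U V : Submodule K M) :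
    sympCompl Ω (U ⊔ V) = sympCompl Ω U ⊓ sympCompl Ω V := by
  simp only [sympCompl_eq_comap_dualAnnihilator, Submodule.dualAnnihilator_sup_eq,
    Submodule.comap_inf]

theorem sympCompl_eq_orthogonal (hΩ : Ω.IsRefl) (V : Submodule K M) :
    sympCompl Ω V = LinearMap.BilinForm.orthogonal Ω V := by
  ext v
  exact ⟨fun hv w hw => hΩ v w (hv w hw), fun hv w hw => hΩ w v (hv w hw)⟩

variable [FiniteDimensional K M]

theorem sympCompl_sympCompl (hΩ : Ω.IsRefl) (hnd : Ω.Nondegenerate) (V : Submodule K M) :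
    sympCompl Ω (sympCompl Ω V) = V := by
  simp only [sympCompl_eq_orthogonal hΩ]
  exact LinearMap.BilinForm.orthogonal_orthogonal hnd hΩ V

theorem sympCompl_inf (hΩ : Ω.IsRefl) (hnd : Ω.Nondegenerate) (U V : Submodule K M) :
    sympCompl Ω (U ⊓ V) = sympCompl Ω U ⊔ sympCompl Ω V := by
  conv_lhs => rw [← sympCompl_sympCompl hΩ hnd U, ← sympCompl_sympCompl hΩ hnd V, ← sympCompl_sup]
  exact sympCompl_sympCompl hΩ hnd _

end SympCompl

/-- If `D` is coisotropic and `C` is Lagrangian in a symplectic vector space, then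
`(C ∩ D) + D⊥` is a Lagrangian subspace. -/
theorem stmt3 {K M : Type*} [Field K] [AddCommGroup M] [Module K M]
    [FiniteDimensional K M]
    (Ω : M →ₗ[K] M →ₗ[K] K)
    (halt : ∀ v, Ω v v = 0)
    (hnd : ∀ v, (∀ w, Ω v w = 0) → v = 0)
    (D C : Submodule K M)
    (hD : sympCompl Ω D ≤ D)
    (hC : C = sympCompl Ω C) :
    (C ⊓ D) ⊔ sympCompl Ω D = sympCompl Ω ((C ⊓ D) ⊔ sympCompl Ω D) := by
  have hΩ : Ω.IsRefl := LinearMap.IsAlt.isRefl halt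
  have hΩnd : Ω.Nondegenerate := hΩ.nondegenerate_iff_separatingLeft.mpr hnd
  rw [sympCompl_sup, sympCompl_inf hΩ hΩnd, sympCompl_sympCompl hΩ hΩnd, ← hC]
  rw [inf_comm C, inf_sup_assoc_of_le C hD, inf_comm]
end
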